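/- arXiv:1303.1347 — 6 statements merged into one kernel-verified Lean document; each statement's English description precedes it below -/
import Mathlib

section
/- Let k ≥ 3 and let f : (Fin k → Bool) → ℝ satisfy |f(x)| = |f(x̄)| for every assignment x, and suppose every identification pin of f is complement stable. Let a, b : Fin k → Bool be linked assignments. Then: (1) if f(b) = f(b̄) and f(b) ≠ 0, then f(a) = f(ā); (2) if f(b) = −f(b̄) and f(b) ≠ 0, then f(a) = −f(ā). -/
/-- Let `k ≥ 3` and let `f` satisfy `|f x| = |f x̄|` for all `x`,
and suppose every identification pin of `f` is complement stable. If `a` and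
`b` are linked assignments, then: (1) `f b = f b̄ ≠ 0` implies `f a = f ā`;
(2) `f b = -f b̄ ≠ 0` implies `f a = -f ā`. -/
theorem linked_sign_transfer
    (k : ℕ) (hk : 3 ≤ k) (f : (Fin k → Bool) → ℝ)
    (habs : ∀ x : Fin k → Bool, |f x| = |f (fun i => !(x i))|)
    (hpins : ∀ i j : Fin k, i ≠ j →
      (∀ x : Fin k → Bool, x i = x j → f (fun l => !(x l)) = f x) ∨
      (∀ x : Fin k → Bool, x i = x j → f (fun l => !(x l)) = - f x))
    (a b : Fin k → Bool)
    (hlink : ∃ s t : Fin k, s ≠ t ∧ a s = a t ∧ b s = b t) :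
    (f b = f (fun l => !(b l)) → f b ≠ 0 → f a = f (fun l => !(a l))) ∧
    (f b = - f (fun l => !(b l)) → f b ≠ 0 → f a = - f (fun l => !(a l))) := by
  obtain ⟨s, t, hst, ha, hb⟩ := hlink
  rcases hpins s t hst with h | h
  · constructor
    · intro _ _; exact (h a ha).symm
    · intro hb1 hb0
      exfalso
      have := h b hb
      rw [this] at hb1
      exact hb0 (by linarith)
  · constructor
    · intro hb1 hb0
      exfalso
      have := h b hb
      rw [this] at hb1
      exact hb0 (by linarith)
    · intro _ _; have := h a ha; linarith
end

section
/- Let k ≥ 3 and let f : (Fin k → Bool) → ℝ satisfy |f(x)| = |f(x̄)| for every assignment x, and suppose every identification pin of f is complement stable. Suppose further that there exist assignments b₊ with f(b₊) = f(b̄₊) ≠ 0 and b₋ with f(b₋) = −f(b̄₋) ≠ 0. Then for every assignment a that is linked to every assignment b (i.e., for every b there are distinct s, t with a s = a t and b s = b t), it holds that f(a) = 0. -/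
/-- Let `k ≥ 3` and let `f` satisfy `|f x| = |f x̄|` for all `x`,
with every identification pin of `f` complement stable. If there exist `b₊`
with `f b₊ = f b̄₊ ≠ 0` and `b₋` with `f b₋ = -f b̄₋ ≠ 0`, then every
assignment `a` that is linked to every assignment satisfies `f a = 0`. -/
theorem universally_linked_vanishes
    (k : ℕ) (hk : 3 ≤ k) (f : (Fin k → Bool) → ℝ)
    (habs : ∀ x : Fin k → Bool, |f x| = |f (fun i => !(x i))|)
    (hpins : ∀ i j : Fin k, i ≠ j →
      (∀ x : Fin k → Bool, x i = x j → f (fun l => !(x l)) = f x) ∨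
      (∀ x : Fin k → Bool, x i = x j → f (fun l => !(x l)) = - f x))
    (bp : Fin k → Bool) (hbp : f bp = f (fun l => !(bp l)) ∧ f bp ≠ 0)
    (bm : Fin k → Bool) (hbm : f bm = - f (fun l => !(bm l)) ∧ f bm ≠ 0)
    (a : Fin k → Bool)
    (ha : ∀ b : Fin k → Bool, ∃ s t : Fin k, s ≠ t ∧ a s = a t ∧ b s = b t) :
    f a = 0 := by
  obtain ⟨s, t, hst, has, hbs⟩ := ha bp
  obtain ⟨s', t', hst', has', hbs'⟩ := ha bm
  have h1 : f (fun l => !(a l)) = f a := by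
    rcases hpins s t hst with h | h
    · exact h a has
    · exfalso
      have := h bp hbs
      rw [← hbp.1] at this
      have : f bp = 0 := by linarith
      exact hbp.2 this
  have h2 : f (fun l => !(a l)) = - f a := by
    rcases hpins s' t' hst' with h | h
    · exfalso
      have := h bm hbs'
      rw [this] at hbm
      have : f bm = 0 := by linarith [hbm.1]
      exact hbm.2 this
    · exact h a has'
  linarith
end

section
/- Let k ≥ 3 and let f : (Fin k → Bool) → ℝ be complement unstable. Then there exists a complement-unstable constraint g of arity k−1 that is either an identification pin f^{x_i=x_j} of f for some distinct indices i, j, or a summation pin f^{x_i=*} of f for some index i. Moreover, if |f(c₀)| = |f(c₁)|, where c₀ is the all-false assignment and c₁ is the all-true assignment of length k, then g can be chosen so that in addition the absolute values of g at the all-false and the all-true assignments of length k−1 are equal. -/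
/-- A constraint is complement stable if it is complement invariant or
complement anti-invariant. -/
def ComplementStable {n : ℕ} (f : (Fin n → Bool) → ℝ) : Prop :=
  (∀ x : Fin n → Bool, f (fun i => !(x i)) = f x) ∨
  (∀ x : Fin n → Bool, f (fun i => !(x i)) = - f x)

private lemma aux_neg_insertNth {n : ℕ} (i : Fin (n+1)) (b : Bool) (y : Fin n → Bool) :
    (fun m => !((i.insertNth b y : Fin (n+1) → Bool) m))
      = (i.insertNth (!b) (fun t => !(y t)) : Fin (n+1) → Bool) := by
  funext m
  refine Fin.succAboveCases i ?_ ?_ m <;> simp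

private lemma aux_insertNth_const {n : ℕ} (i : Fin (n+1)) (b : Bool) :
    (i.insertNth b (fun _ => b) : Fin (n+1) → Bool) = fun _ => b := by
  funext m; refine Fin.succAboveCases i ?_ ?_ m <;> simp

private lemma aux_insertNth_self {n : ℕ} (i : Fin (n+1)) (x : Fin (n+1) → Bool) :
    (i.insertNth (x i) (fun t => x (i.succAbove t)) : Fin (n+1) → Bool) = x := by
  funext m; refine Fin.succAboveCases i ?_ ?_ m <;> simp

private lemma aux_update_insertNth {n : ℕ} (i : Fin (n+1)) (b c : Bool) (y : Fin n → Bool) :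
    Function.update (i.insertNth b y : Fin (n+1) → Bool) i c
      = (i.insertNth c y : Fin (n+1) → Bool) := by
  funext m
  refine Fin.succAboveCases i ?_ ?_ m <;>
    simp [Function.update_of_ne (Fin.succAbove_ne i _)]

private lemma aux_core (pu qu pv qv pw qw : Bool)
    (h1 : ¬(pu = pv ∧ qu = qv)) (h2 : ¬(pu = pw ∧ qu = qw)) (h3 : ¬(pv = pw ∧ qv = qw))
    (hPuv : ¬(pv = !pu ∧ qv = qu)) (hPuw : ¬(pw = !pu ∧ qw = qu))
    (hPvu : ¬(pu = !pv ∧ qu = qv)) (hPvw : ¬(pw = !pv ∧ qw = qv)) : False := by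
  revert h1 h2 h3 hPuv hPuw hPvu hPvw
  revert pu qu pv qv pw qw
  decide

/-- Every complement-unstable constraint `f` of arity `k + 1 ≥ 3`
has a complement-unstable pin `g` of arity `k`: either an identification pin
`f^{x_i=x_j}` (for distinct `i, j`) or a summation pin `f^{x_i=*}` (for some
`i`).  Moreover, if `|f| agrees on the all-false and all-true inputs, `g` can
be chosen so that `|g|` also agrees on the all-false and all-true inputs. -/
theorem exists_complement_unstable_pin
    (k : ℕ) (hk : 2 ≤ k) (f : (Fin (k + 1) → Bool) → ℝ)
    (hunst : ¬ ComplementStable f) :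
    ∃ g : (Fin k → Bool) → ℝ,
      ((∃ i j : Fin (k + 1), i ≠ j ∧
          g = fun y : Fin k → Bool =>
            f (Function.update (i.insertNth false y) i ((i.insertNth false y : Fin (k + 1) → Bool) j))) ∨
       (∃ i : Fin (k + 1),
          g = fun y : Fin k → Bool =>
            f (i.insertNth false y) + f (i.insertNth true y))) ∧
      ¬ ComplementStable g ∧
      (|f (fun _ => false)| = |f (fun _ => true)| →
        |g (fun _ => false)| = |g (fun _ => true)|) := by
  classical
  let s : (Fin (k + 1) → Bool) → ℝ := fun x => f x + f (fun m => !(x m))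
  let d : (Fin (k + 1) → Bool) → ℝ := fun x => f x - f (fun m => !(x m))
  have hs_def : ∀ x, s x = f x + f (fun m => !(x m)) := fun _ => rfl
  have hd_def : ∀ x, d x = f x - f (fun m => !(x m)) := fun _ => rfl
  unfold ComplementStable at hunst
  push_neg at hunst
  obtain ⟨⟨xB, hxB⟩, xA, hxA⟩ := hunst
  have hb : d xB ≠ 0 := by
    rw [hd_def]; intro h; apply hxB; linarith
  have ha : s xA ≠ 0 := by
    rw [hs_def]; intro h; apply hxA; linarith
  set a := xA
  set b := xB
  by_cases hcase : ∃ i j : Fin (k + 1), i ≠ j ∧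
      (∃ x, x i = x j ∧ s x ≠ 0) ∧ (∃ x, x i = x j ∧ d x ≠ 0)
  · -- identification pin
    obtain ⟨i, j, hij, ⟨xs, hxs, hxs0⟩, ⟨xd, hxd, hxd0⟩⟩ := hcase
    obtain ⟨tj, htj⟩ := Fin.exists_succAbove_eq hij.symm
    have hXdef : ∀ y : Fin k → Bool,
        Function.update (i.insertNth false y : Fin (k+1) → Bool) i
            ((i.insertNth false y : Fin (k + 1) → Bool) j)
          = (i.insertNth (y tj) y : Fin (k+1) → Bool) := by
      intro y
      rw [← htj, Fin.insertNth_apply_succAbove]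
      exact aux_update_insertNth i false (y tj) y
    have hXall : ∀ x : Fin (k+1) → Bool, x i = x j → ∃ y : Fin k → Bool,
        Function.update (i.insertNth false y : Fin (k+1) → Bool) i
            ((i.insertNth false y : Fin (k + 1) → Bool) j) = x ∧
        Function.update (i.insertNth false (fun m => !(y m)) : Fin (k+1) → Bool) i
            ((i.insertNth false (fun m => !(y m)) : Fin (k + 1) → Bool) j)
          = fun m => !(x m) := by
      intro x hxij
      refine ⟨fun t => x (i.succAbove t), ?_, ?_⟩
      · simp only [hXdef]
        rw [htj, ← hxij]
        exact aux_insertNth_self i x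
      · simp only [hXdef]
        rw [htj, ← hxij]
        rw [← aux_neg_insertNth i (x i) (fun t => x (i.succAbove t))]
        simp only [aux_insertNth_self i x]
    refine ⟨_, Or.inl ⟨i, j, hij, rfl⟩, ?_, ?_⟩
    · intro hst
      unfold ComplementStable at hst
      rcases hst with hst | hst
      · obtain ⟨y, h1, h2⟩ := hXall xd hxd
        have h := hst y
        simp only [h1, h2] at h
        apply hxd0
        rw [hd_def, h, sub_self]
      · obtain ⟨y, h1, h2⟩ := hXall xs hxs
        have h := hst y
        simp only [h1, h2] at h
        apply hxs0
        rw [hs_def, h]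
        ring
    · intro hyp
      have h0 : Function.update (i.insertNth false (fun _ => false) : Fin (k+1) → Bool) i
          ((i.insertNth false (fun _ => false) : Fin (k + 1) → Bool) j) = (fun _ => false) := by
        rw [hXdef]; exact aux_insertNth_const i false
      have h1 : Function.update (i.insertNth false (fun _ => true) : Fin (k+1) → Bool) i
          ((i.insertNth false (fun _ => true) : Fin (k + 1) → Bool) j) = (fun _ => true) := by
        rw [hXdef]; exact aux_insertNth_const i true
      simp only [h0, h1]
      exact hyp
  · -- summation pin
    have hcross : ∀ (u v : Fin (k+1) → Bool), s u ≠ 0 → d v ≠ 0 →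
        ∀ p q, p ≠ q → ¬(u p = u q ∧ v p = v q) := by
      intro u v hu hv p q hpq hand
      exact hcase ⟨p, q, hpq, ⟨u, hand.1, hu⟩, ⟨v, hand.2, hv⟩⟩
    have pigeon : ∀ x : Fin (k+1) → Bool, ∃ p q, p ≠ q ∧ x p = x q := by
      intro x
      apply Fintype.exists_ne_map_eq_of_card_lt
      simp only [Fintype.card_fin, Fintype.card_bool]
      omega
    have hpin : ∃ i : Fin (k + 1),
        (∃ y : Fin k → Bool,
          s (i.insertNth false y) + s (i.insertNth true y) ≠ 0) ∧
        (∃ y : Fin k → Bool,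
          d (i.insertNth false y) + d (i.insertNth true y) ≠ 0) := by
      by_contra hno
      push_neg at hno
      have hno' : ∀ i : Fin (k+1),
          (∀ y, s (i.insertNth false y) + s (i.insertNth true y) = 0) ∨
          (∀ y, d (i.insertNth false y) + d (i.insertNth true y) = 0) := by
        intro i
        by_cases hA : ∀ y, s (i.insertNth false y) + s (i.insertNth true y) = 0
        · exact Or.inl hA
        · push_neg at hA
          exact Or.inr (hno i hA)
      have cab : ∀ p q, p ≠ q → ¬(a p = a q ∧ b p = b q) := hcross a b ha hb
      have PS : ∀ z : Fin (k+1),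
          (∀ y, s (z.insertNth false y) + s (z.insertNth true y) = 0) →
          ∀ m, ¬(a m = !(a z) ∧ b m = b z) := by
        intro z hz m hand
        obtain ⟨h1, h2⟩ := hand
        have hself : (z.insertNth (a z) (fun t => a (z.succAbove t)) : Fin (k+1) → Bool) = a :=
          aux_insertNth_self z a
        have hsz : s (z.insertNth (!(a z)) (fun t => a (z.succAbove t)) : Fin (k+1) → Bool)
            = - s a := by
          have h := hz (fun t => a (z.succAbove t))
          cases haz : a z
          · rw [haz] at hself; rw [hself] at h
            simp only [Bool.not_false]; linarith
          · rw [haz] at hself; rw [hself] at h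
            simp only [Bool.not_true]; linarith
        have hsa' : s (z.insertNth (!(a z)) (fun t => a (z.succAbove t)) : Fin (k+1) → Bool) ≠ 0 := by
          rw [hsz]; simpa using ha
        have hmz : m ≠ z := by
          intro e; rw [e] at h1; simp at h1
        obtain ⟨t, ht⟩ := Fin.exists_succAbove_eq hmz
        have h1' : (z.insertNth (!(a z)) (fun t => a (z.succAbove t)) : Fin (k+1) → Bool) m
            = (z.insertNth (!(a z)) (fun t => a (z.succAbove t)) : Fin (k+1) → Bool) z := by
          rw [← ht, Fin.insertNth_apply_succAbove, Fin.insertNth_apply_same, ht, h1]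
        exact hcross _ b hsa' hb m z hmz ⟨h1', h2⟩
      have PD : ∀ z : Fin (k+1),
          (∀ y, d (z.insertNth false y) + d (z.insertNth true y) = 0) →
          ∀ m, ¬(a m = a z ∧ b m = !(b z)) := by
        intro z hz m hand
        obtain ⟨h1, h2⟩ := hand
        have hself : (z.insertNth (b z) (fun t => b (z.succAbove t)) : Fin (k+1) → Bool) = b :=
          aux_insertNth_self z b
        have hdz : d (z.insertNth (!(b z)) (fun t => b (z.succAbove t)) : Fin (k+1) → Bool)
            = - d b := by
          have h := hz (fun t => b (z.succAbove t))
          cases hbz : b z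
          · rw [hbz] at hself; rw [hself] at h
            simp only [Bool.not_false]; linarith
          · rw [hbz] at hself; rw [hself] at h
            simp only [Bool.not_true]; linarith
        have hdb' : d (z.insertNth (!(b z)) (fun t => b (z.succAbove t)) : Fin (k+1) → Bool) ≠ 0 := by
          rw [hdz]; simpa using hb
        have hmz : m ≠ z := by
          intro e; rw [e] at h2; simp at h2
        obtain ⟨t, ht⟩ := Fin.exists_succAbove_eq hmz
        have h2' : (z.insertNth (!(b z)) (fun t => b (z.succAbove t)) : Fin (k+1) → Bool) m
            = (z.insertNth (!(b z)) (fun t => b (z.succAbove t)) : Fin (k+1) → Bool) z := by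
          rw [← ht, Fin.insertNth_apply_succAbove, Fin.insertNth_apply_same, ht, h2]
        exact hcross a _ ha hdb' m z hmz ⟨h1, h2'⟩
      have contraS : ∀ u v w : Fin (k+1), u ≠ v → u ≠ w → v ≠ w →
          (∀ y, s (u.insertNth false y) + s (u.insertNth true y) = 0) →
          (∀ y, s (v.insertNth false y) + s (v.insertNth true y) = 0) → False := by
        intro u v w huv huw hvw hU hV
        exact aux_core (a u) (b u) (a v) (b v) (a w) (b w)
          (cab u v huv) (cab u w huw) (cab v w hvw)
          (PS u hU v) (PS u hU w) (PS v hV u) (PS v hV w)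
      have contraD : ∀ u v w : Fin (k+1), u ≠ v → u ≠ w → v ≠ w →
          (∀ y, d (u.insertNth false y) + d (u.insertNth true y) = 0) →
          (∀ y, d (v.insertNth false y) + d (v.insertNth true y) = 0) → False := by
        intro u v w huv huw hvw hU hV
        exact aux_core (b u) (a u) (b v) (a v) (b w) (a w)
          (fun hh => cab u v huv ⟨hh.2, hh.1⟩)
          (fun hh => cab u w huw ⟨hh.2, hh.1⟩)
          (fun hh => cab v w hvw ⟨hh.2, hh.1⟩)
          (fun hh => PD u hU v ⟨hh.2, hh.1⟩)
          (fun hh => PD u hU w ⟨hh.2, hh.1⟩)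
          (fun hh => PD v hV u ⟨hh.2, hh.1⟩)
          (fun hh => PD v hV w ⟨hh.2, hh.1⟩)
      have hb0 : (0 : ℕ) < k + 1 := by omega
      have hb1 : (1 : ℕ) < k + 1 := by omega
      have hb2 : (2 : ℕ) < k + 1 := by omega
      set i0 : Fin (k+1) := ⟨0, hb0⟩
      set i1 : Fin (k+1) := ⟨1, hb1⟩
      set i2 : Fin (k+1) := ⟨2, hb2⟩
      have h01 : i0 ≠ i1 := by simp [i0, i1, Fin.ext_iff]
      have h02 : i0 ≠ i2 := by simp [i0, i2, Fin.ext_iff]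
      have h12 : i1 ≠ i2 := by simp [i1, i2, Fin.ext_iff]
      rcases hno' i0 with hS0 | hD0 <;> rcases hno' i1 with hS1 | hD1 <;>
        rcases hno' i2 with hS2 | hD2
      · exact contraS i0 i1 i2 h01 h02 h12 hS0 hS1
      · exact contraS i0 i1 i2 h01 h02 h12 hS0 hS1
      · exact contraS i0 i2 i1 h02 h01 h12.symm hS0 hS2
      · exact contraD i1 i2 i0 h12 h01.symm h02.symm hD1 hD2
      · exact contraS i1 i2 i0 h12 h01.symm h02.symm hS1 hS2
      · exact contraD i0 i2 i1 h02 h01 h12.symm hD0 hD2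
      · exact contraD i0 i1 i2 h01 h02 h12 hD0 hD1
      · exact contraD i0 i1 i2 h01 h02 h12 hD0 hD1
    obtain ⟨i, ⟨ys, hys⟩, ⟨yd, hyd⟩⟩ := hpin
    refine ⟨fun y => f (i.insertNth false y) + f (i.insertNth true y),
      Or.inr ⟨i, rfl⟩, ?_, ?_⟩
    · -- unstable
      have key : ∀ (y : Fin k → Bool) (c : Bool),
          (i.insertNth c (fun m => !(y m)) : Fin (k+1) → Bool)
            = fun m => !((i.insertNth (!c) y : Fin (k+1) → Bool) m) := by
        intro y c
        rw [aux_neg_insertNth i (!c) y, Bool.not_not]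
      intro hst
      unfold ComplementStable at hst
      rcases hst with hst | hst
      · have h := hst yd
        simp only [key, Bool.not_false, Bool.not_true] at h
        apply hyd
        simp only [hd_def]
        linarith
      · have h := hst ys
        simp only [key, Bool.not_false, Bool.not_true] at h
        apply hys
        simp only [hs_def]
        linarith
    · -- endpoints
      intro _
      have hs0 : s (fun _ => false) = 0 := by
        by_contra h
        obtain ⟨p, q, hpq, he⟩ := pigeon b
        exact hcross _ b h hb p q hpq ⟨rfl, he⟩
      have hd0 : d (fun _ => false) = 0 := by
        by_contra h
        obtain ⟨p, q, hpq, he⟩ := pigeon a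
        exact hcross a _ ha h p q hpq ⟨he, rfl⟩
      simp only [hs_def, hd_def, Bool.not_false] at hs0 hd0
      have hc0 : f (fun _ => false) = 0 := by linarith
      have hc1 : f (fun _ => true) = 0 := by linarith
      show |f (i.insertNth false fun _ => false) + f (i.insertNth true fun _ => false)|
          = |f (i.insertNth false fun _ => true) + f (i.insertNth true fun _ => true)|
      rw [aux_insertNth_const i false, aux_insertNth_const i true, hc0, hc1,
        zero_add, add_zero]
      have hnege : (fun m => !((i.insertNth true (fun _ => false) : Fin (k+1) → Bool) m))
          = (i.insertNth false (fun _ => true) : Fin (k+1) → Bool) := by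
        have h := aux_neg_insertNth i true (fun _ => false)
        simpa using h
      rw [← hnege]
      have hsd : s (i.insertNth true (fun _ => false) : Fin (k+1) → Bool) = 0 ∨
          d (i.insertNth true (fun _ => false) : Fin (k+1) → Bool) = 0 := by
        by_contra h
        push_neg at h
        obtain ⟨p, q, hpq, he⟩ := pigeon (i.insertNth true (fun _ => false))
        exact hcross _ _ h.1 h.2 p q hpq ⟨he, he⟩
      rcases hsd with h | h
      · simp only [hs_def] at h
        have : f (fun m => !((i.insertNth true (fun _ => false) : Fin (k+1) → Bool) m))
            = - f (i.insertNth true (fun _ => false)) := by linarith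
        rw [this, abs_neg]
      · simp only [hd_def] at h
        have : f (fun m => !((i.insertNth true (fun _ => false) : Fin (k+1) → Bool) m))
            = f (i.insertNth true (fun _ => false)) := by linarith
        rw [this]
end

section
/- Let n be a positive integer and z a real number with −1/n ≤ z ≤ 2/n. If z ≥ 0, then 1 + n·z ≤ (1 + z)^n ≤ 1 + n²·z; if z ≤ 0, then 1 + n·z ≤ (1 + z)^n ≤ 1 + (n·z)/2. Equivalently, there exists e ∈ {1/2, n} with 1 + n·z ≤ (1 + z)^n ≤ 1 + e·n·z. -/
lemma aux_pos (z : ℝ) (hz : 0 ≤ z) :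
    ∀ n : ℕ, (n : ℝ) * z ≤ 2 → (1 + z) ^ n ≤ 1 + (n : ℝ) ^ 2 * z := by
  intro n
  induction n with
  | zero => simp
  | succ n ih =>
    intro h
    have hn1 : (n : ℝ) * z ≤ 2 := by push_cast at h; nlinarith
    have h1 := ih hn1
    have hpow : (0:ℝ) ≤ (1 + z) ^ n := by positivity
    have he : (1 + z) ^ (n + 1) = (1 + z) ^ n * (1 + z) := by ring
    rw [he]
    push_cast
    have hnn : (0:ℝ) ≤ (n:ℝ) := Nat.cast_nonneg n
    have key : (0:ℝ) ≤ ((n:ℝ) * z) * (2 - (n:ℝ) * z) :=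
      mul_nonneg (mul_nonneg hnn hz) (by linarith)
    nlinarith [mul_le_mul_of_nonneg_right h1 (by linarith : (0:ℝ) ≤ 1 + z), key]

lemma aux_neg (z : ℝ) (hz : z ≤ 0) :
    ∀ n : ℕ, -1 ≤ (n : ℝ) * z → (1 + z) ^ n ≤ 1 + (n : ℝ) * z / 2 := by
  intro n
  induction n with
  | zero => simp
  | succ n ih =>
    intro h
    have hn1 : -1 ≤ (n : ℝ) * z := by push_cast at h; nlinarith
    have h1 := ih hn1
    have h1z : (0:ℝ) ≤ 1 + z := by
      by_cases hn0 : n = 0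
      · subst hn0; push_cast at h; linarith
      · have : 1 ≤ (n:ℝ) := by exact_mod_cast Nat.one_le_iff_ne_zero.mpr hn0
        nlinarith
    have he : (1 + z) ^ (n + 1) = (1 + z) ^ n * (1 + z) := by ring
    rw [he]
    push_cast
    nlinarith [mul_le_mul_of_nonneg_right h1 h1z]

/-- For a positive integer `n` and a real `z` with
`-1/n ≤ z ≤ 2/n`: if `z ≥ 0` then `1 + n·z ≤ (1+z)^n ≤ 1 + n²·z`; if `z ≤ 0`
then `1 + n·z ≤ (1+z)^n ≤ 1 + (n·z)/2`.  Equivalently, there is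
`e ∈ {1/2, n}` with `1 + n·z ≤ (1+z)^n ≤ 1 + e·n·z`. -/
theorem binomial_expansion_bounds
    (n : ℕ) (hn : 1 ≤ n) (z : ℝ)
    (hz1 : -(1 / (n : ℝ)) ≤ z) (hz2 : z ≤ 2 / (n : ℝ)) :
    ((0 ≤ z → 1 + (n : ℝ) * z ≤ (1 + z) ^ n ∧ (1 + z) ^ n ≤ 1 + (n : ℝ) ^ 2 * z) ∧
     (z ≤ 0 → 1 + (n : ℝ) * z ≤ (1 + z) ^ n ∧ (1 + z) ^ n ≤ 1 + ((n : ℝ) * z) / 2)) ∧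
    ∃ e : ℝ, (e = 1 / 2 ∨ e = (n : ℝ)) ∧
      1 + (n : ℝ) * z ≤ (1 + z) ^ n ∧ (1 + z) ^ n ≤ 1 + e * ((n : ℝ) * z) := by
  have hnpos : (0:ℝ) < n := by exact_mod_cast hn
  have hn1 : (1:ℝ) ≤ n := by exact_mod_cast hn
  have hnz2 : (n : ℝ) * z ≤ 2 := by
    have h := mul_le_mul_of_nonneg_left hz2 hnpos.le
    have h2 : (n:ℝ) * (2 / (n:ℝ)) = 2 := by field_simp
    linarith
  have hnz1 : -1 ≤ (n : ℝ) * z := by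
    have h := mul_le_mul_of_nonneg_left hz1 hnpos.le
    have h2 : (n:ℝ) * (-(1 / (n:ℝ))) = -1 := by field_simp
    linarith
  have hz2' : -2 ≤ z := by nlinarith
  have hlow : 1 + (n : ℝ) * z ≤ (1 + z) ^ n := by
    have := one_add_mul_le_pow hz2' n
    linarith [this]
  refine ⟨⟨fun hz0 => ⟨hlow, aux_pos z hz0 n hnz2⟩,
          fun hz0 => ⟨hlow, by have := aux_neg z hz0 n hnz1; linarith⟩⟩, ?_⟩
  rcases le_or_gt 0 z with hz0 | hz0
  · exact ⟨(n:ℝ), Or.inr rfl, hlow, by have := aux_pos z hz0 n hnz2; nlinarith⟩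
  · exact ⟨1/2, Or.inl rfl, hlow, by have := aux_neg z hz0.le n hnz1; nlinarith⟩
end

section
/- Let α₁,…,α_m be real numbers that are algebraic over ℚ, and let c be the degree [ℚ(α₁,…,α_m) : ℚ] of the field extension they generate over ℚ. Then there exists a constant e > 0 such that for every tuple of positive integers (N₁,…,N_m) and every family of integers a_k indexed by k = (k₁,…,k_m) ∈ [N₁] × ⋯ × [N_m], if α := Σ_k a_k · ∏_{i=1}^m α_i^{k_i} is nonzero, then |α| ≥ (Σ_k |a_k|)^{1−c} · ∏_{i=1}^m e^{−c·N_i}. -/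
set_option maxHeartbeats 1600000

noncomputable def Complex.abs : AbsoluteValue ℂ ℝ := NormedField.toAbsoluteValue ℂ

theorem Complex.abs_ofReal (r : ℝ) : Complex.abs (r : ℂ) = |r| := Complex.norm_real r


/-- Stolarsky: Let `α₁, …, α_m` be algebraic real numbers and
let `c` be the degree `[ℚ(α₁,…,α_m) : ℚ]`.  There is a constant `e > 0` such
that for all positive integers `N₁, …, N_m` and all integer coefficients
`a_k` indexed by `k ∈ [N₁] × ⋯ × [N_m]`, if
`α = Σ_k a_k ∏_i α_i^{k_i}` is nonzero then
`|α| ≥ (Σ_k |a_k|)^{1-c} · ∏_i e^{-c·N_i}`. -/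
theorem algebraic_lower_bound
    (m : ℕ) (α : Fin m → ℝ) (halg : ∀ i, IsAlgebraic ℚ (α i))
    (c : ℕ)
    (hc : c = Module.finrank ℚ (IntermediateField.adjoin ℚ (Set.range α))) :
    ∃ e : ℝ, 0 < e ∧
      ∀ (N : Fin m → ℕ), (∀ i, 1 ≤ N i) →
        ∀ a : (∀ i, Fin (N i)) → ℤ,
          (∑ k : ∀ i, Fin (N i), (a k : ℝ) * ∏ i, α i ^ ((k i : ℕ) + 1)) ≠ 0 →
          (∑ k : ∀ i, Fin (N i), (|a k| : ℝ)) ^ ((1 : ℤ) - (c : ℤ)) *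
              ∏ i, e ^ (-((c : ℤ) * (N i : ℤ)))
            ≤ |∑ k : ∀ i, Fin (N i), (a k : ℝ) * ∏ i, α i ^ ((k i : ℕ) + 1)| := by
  classical
  set K := IntermediateField.adjoin ℚ (Set.range α) with hK
  haveI : FiniteDimensional ℚ K := by
    apply IntermediateField.finiteDimensional_adjoin
    rintro x ⟨i, rfl⟩; exact (halg i).isIntegral
  have hcard : Fintype.card (K →ₐ[ℚ] ℂ) = Module.finrank ℚ K := AlgHom.card ℚ K ℂ
  have hc1 : 1 ≤ c := by rw [hc]; exact Module.finrank_pos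
  -- the real embedding
  let σ₀ : K →ₐ[ℚ] ℂ := (Complex.ofRealHom.comp (algebraMap K ℝ)).toRatAlgHom
  have hσ₀ : ∀ x : K, σ₀ x = ((x : ℝ) : ℂ) := fun x => rfl
  -- the generators as elements of K
  have hmem : ∀ i, α i ∈ K := fun i => IntermediateField.subset_adjoin ℚ _ ⟨i, rfl⟩
  set αK : Fin m → K := fun i => ⟨α i, hmem i⟩ with hαK
  -- denominators
  have hDex : ∀ i, ∃ D : ℕ, 1 ≤ D ∧ IsIntegral ℤ ((D : K) * αK i) := by
    intro i
    have halgZ : IsAlgebraic ℤ (α i) := (IsFractionRing.isAlgebraic_iff ℤ ℚ ℝ).mpr (halg i)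
    obtain ⟨y, hy, hxy⟩ := halgZ.exists_integral_multiple
    have hint : IsIntegral ℤ ((y : ℝ) * α i) := by rw [← zsmul_eq_mul]; exact hxy
    have h1 : 1 ≤ y.natAbs := by omega
    refine ⟨y.natAbs, h1, ?_⟩
    have hint2 : IsIntegral ℤ ((y.natAbs : ℝ) * α i) := by
      rw [Nat.cast_natAbs, Int.cast_abs]
      rcases abs_cases ((y : ℤ) : ℝ) with ⟨h, _⟩ | ⟨h, _⟩
      · rw [h]; exact hint
      · rw [h, neg_mul]; exact hint.neg
    rw [← isIntegral_algHom_iff (K.val.restrictScalars ℤ) Subtype.val_injective]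
    convert hint2 using 1
    rw [AlgHom.restrictScalars_apply, map_mul, map_natCast]; rfl
  choose D hD1 hDint using hDex
  -- bounds on conjugates
  set C : Fin m → ℝ := fun i => 1 + ∑ σ : K →ₐ[ℚ] ℂ, Complex.abs (σ ((D i : K) * αK i))
    with hCdef
  have hC1 : ∀ i, 1 ≤ C i := fun i =>
    le_add_of_nonneg_right (Finset.sum_nonneg fun σ _ => Complex.abs.nonneg _)
  have hCσ : ∀ i (σ : K →ₐ[ℚ] ℂ), Complex.abs (σ ((D i : K) * αK i)) ≤ C i := by
    intro i σ
    refine le_trans ?_ (le_add_of_nonneg_left zero_le_one)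
    exact Finset.single_le_sum (f := fun τ : K →ₐ[ℚ] ℂ => Complex.abs (τ ((D i : K) * αK i)))
      (fun τ _ => Complex.abs.nonneg _) (Finset.mem_univ σ)
  set F : Fin m → ℝ := fun i => (D i : ℝ) * C i with hFdef
  have hF1 : ∀ i, 1 ≤ F i := fun i => by
    have : (1:ℝ) ≤ (D i : ℝ) := by exact_mod_cast hD1 i
    simp only [hFdef]
    nlinarith [hC1 i]
  have hDF : ∀ i, (D i : ℝ) ≤ F i := fun i => by
    have h0 : (0:ℝ) ≤ (D i : ℝ) := Nat.cast_nonneg _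
    simp only [hFdef]
    nlinarith [hC1 i]
  refine ⟨1 + ∑ i, F i, lt_of_lt_of_le one_pos
    (le_add_of_nonneg_right (Finset.sum_nonneg fun i _ => le_trans zero_le_one (hF1 i))), ?_⟩
  set e : ℝ := 1 + ∑ i, F i with hedef
  have he1 : (1:ℝ) ≤ e :=
    le_add_of_nonneg_right (Finset.sum_nonneg fun i _ => le_trans zero_le_one (hF1 i))
  have heF : ∀ i, F i ≤ e := fun i => by
    refine le_trans ?_ (le_add_of_nonneg_left zero_le_one)
    exact Finset.single_le_sum (fun j _ => le_trans zero_le_one (hF1 j)) (Finset.mem_univ i)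
  intro N hN a hne
  set S : ℝ := ∑ k : ∀ i, Fin (N i), (a k : ℝ) * ∏ i, α i ^ ((k i : ℕ) + 1) with hSdef
  set A : ℝ := ∑ k : ∀ i, Fin (N i), (|a k| : ℝ) with hAdef
  have hA1 : (1:ℝ) ≤ A := by
    by_contra h
    apply hne
    have hz : ∀ k, a k = 0 := by
      intro k
      by_contra hk
      have h1 : (1:ℝ) ≤ (|a k| : ℝ) := by exact_mod_cast Int.one_le_abs hk
      have := Finset.single_le_sum (f := fun k => (|a k| : ℝ))
        (fun j _ => by positivity) (Finset.mem_univ k)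
      rw [← hAdef] at this; linarith
    simp [hSdef, hz]
  have hApos : (0:ℝ) < A := lt_of_lt_of_le one_pos hA1
  -- the element of K
  set SK : K := ∑ k : ∀ i, Fin (N i), (a k : K) * ∏ i, αK i ^ ((k i : ℕ) + 1) with hSKdef
  have hSKval : (algebraMap K ℝ) SK = S := by
    rw [hSKdef, map_sum, hSdef]
    refine Finset.sum_congr rfl fun k _ => ?_
    rw [map_mul, map_prod]
    simp [hαK]
  set β : K := (∏ i, (D i : K) ^ N i) * SK with hβdef
  have hβeq : β = ∑ k : ∀ i, Fin (N i), (a k : K) *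
      ∏ i, ((D i : K) ^ (N i - ((k i : ℕ) + 1)) * ((D i : K) * αK i) ^ ((k i : ℕ) + 1)) := by
    rw [hβdef, hSKdef, Finset.mul_sum]
    refine Finset.sum_congr rfl fun k _ => ?_
    rw [← mul_assoc, mul_comm (∏ i, (D i : K) ^ N i) ((a k : K)), mul_assoc,
      ← Finset.prod_mul_distrib]
    congr 1
    refine Finset.prod_congr rfl fun i _ => ?_
    have hle : (k i : ℕ) + 1 ≤ N i := (k i).isLt
    rw [mul_pow, ← mul_assoc, ← pow_add, Nat.sub_add_cancel hle]
  have hβint : IsIntegral ℤ β := by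
    rw [hβeq]
    have : (∑ k : ∀ i, Fin (N i), (a k : K) *
        ∏ i, ((D i : K) ^ (N i - ((k i : ℕ) + 1)) * ((D i : K) * αK i) ^ ((k i : ℕ) + 1)))
        ∈ integralClosure ℤ K := by
      refine Subalgebra.sum_mem _ fun k _ => Subalgebra.mul_mem _
        (Subalgebra.intCast_mem _ _) (Subalgebra.prod_mem _ fun i _ => Subalgebra.mul_mem _
          (Subalgebra.pow_mem _ (Subalgebra.natCast_mem _ _) _)
          (Subalgebra.pow_mem _ (hDint i) _))
    exact this
  have hSK0 : SK ≠ 0 := by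
    intro h
    apply hne
    rw [← hSKval, h, map_zero]
  have hβ0 : β ≠ 0 := by
    rw [hβdef]
    refine mul_ne_zero (Finset.prod_ne_zero_iff.mpr fun i _ => pow_ne_zero _ ?_) hSK0
    exact_mod_cast Nat.one_le_iff_ne_zero.mp (hD1 i)
  -- the norm is a nonzero integer
  set n : ℚ := Algebra.norm ℚ β with hndef
  have hnint : IsIntegral ℤ n := Algebra.isIntegral_norm ℚ hβint
  obtain ⟨z, hz⟩ := IsIntegrallyClosed.isIntegral_iff.mp hnint
  have hn0 : n ≠ 0 := by
    rw [hndef]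
    exact (Algebra.norm_ne_zero_iff).mpr hβ0
  have h1n : (1:ℝ) ≤ |(n : ℝ)| := by
    have hz0 : z ≠ 0 := by rintro rfl; simp at hz; exact hn0 hz.symm
    have : (1:ℤ) ≤ |z| := Int.one_le_abs hz0
    have hzr : ((z : ℚ) : ℝ) = (n : ℝ) := by
      have : (z : ℚ) = n := by simpa using hz
      exact_mod_cast congrArg (fun q : ℚ => (q : ℝ)) this
    rw [← hzr]
    push_cast
    exact_mod_cast this
  -- the product formula
  have hprod : |(n : ℝ)| = ∏ σ : K →ₐ[ℚ] ℂ, Complex.abs (σ β) := by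
    have h := Algebra.norm_eq_prod_embeddings ℚ ℂ (L := K) β
    rw [← hndef] at h
    calc |(n : ℝ)| = Complex.abs (((n : ℝ) : ℂ)) := (Complex.abs_ofReal _).symm
      _ = Complex.abs ((algebraMap ℚ ℂ) n) := by
          rw [eq_ratCast (algebraMap ℚ ℂ) n, Complex.ofReal_ratCast]
      _ = ∏ σ : K →ₐ[ℚ] ℂ, Complex.abs (σ β) := by
          rw [h, map_prod Complex.abs]
  -- value at the real embedding
  have hσ₀β : Complex.abs (σ₀ β) = (∏ i, (D i : ℝ) ^ N i) * |S| := by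
    rw [hσ₀, Complex.abs_ofReal]
    have : ((β : K) : ℝ) = (∏ i, (D i : ℝ) ^ N i) * S := by
      rw [← hSKval, hβdef]
      push_cast
      rfl
    rw [this, abs_mul, abs_of_nonneg (Finset.prod_nonneg fun i _ => by positivity)]
  -- bound at every embedding
  have hbound : ∀ σ : K →ₐ[ℚ] ℂ, Complex.abs (σ β) ≤ A * ∏ i, F i ^ N i := by
    intro σ
    rw [hβeq, map_sum]
    refine le_trans (Complex.abs.sum_le _ _) ?_
    rw [hAdef, Finset.sum_mul]
    refine Finset.sum_le_sum fun k _ => ?_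
    rw [map_mul, map_prod, map_mul Complex.abs]
    have habs : Complex.abs (σ ((a k : K))) = (|a k| : ℝ) := by
      rw [map_intCast σ (a k)]
      rw [show ((a k : ℂ)) = (((a k : ℝ)) : ℂ) by push_cast; ring, Complex.abs_ofReal]
      all_goals push_cast
      all_goals try rfl
      all_goals try ring
    rw [habs]
    refine mul_le_mul_of_nonneg_left ?_ (by positivity)

    rw [map_prod Complex.abs]
    refine Finset.prod_le_prod (fun i _ => Complex.abs.nonneg _) fun i _ => ?_
    rw [map_mul σ, map_mul Complex.abs, map_pow σ, map_pow Complex.abs, map_pow σ,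
      map_pow Complex.abs]
    have hD1r : (1:ℝ) ≤ (D i : ℝ) := by exact_mod_cast hD1 i
    have habsD : Complex.abs (σ ((D i : K))) = (D i : ℝ) := by
      rw [map_natCast σ (D i)]
      rw [show ((D i : ℂ)) = (((D i : ℝ)) : ℂ) by push_cast; rfl, Complex.abs_ofReal,
        abs_of_nonneg (by positivity)]
    rw [habsD, hFdef]
    have hle : (k i : ℕ) + 1 ≤ N i := (k i).isLt
    have h1 : (D i : ℝ) ^ (N i - ((k i : ℕ) + 1)) ≤ (D i : ℝ) ^ N i :=
      pow_le_pow_right₀ hD1r (Nat.sub_le _ _)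
    have h2 : Complex.abs (σ ((D i : K) * αK i)) ^ ((k i : ℕ) + 1) ≤ C i ^ N i := by
      refine le_trans (pow_le_pow_left₀ (Complex.abs.nonneg _) (hCσ i σ) _) ?_
      exact pow_le_pow_right₀ (hC1 i) hle
    calc (D i : ℝ) ^ (N i - ((k i : ℕ) + 1)) * Complex.abs (σ ((D i : K) * αK i)) ^ ((k i : ℕ) + 1)
        ≤ (D i : ℝ) ^ N i * C i ^ N i := by
          refine mul_le_mul h1 h2 (pow_nonneg (Complex.abs.nonneg _) _)
            (pow_nonneg (Nat.cast_nonneg _) _)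
      _ = ((D i : ℝ) * C i) ^ N i := (mul_pow _ _ _).symm
  -- putting it together
  have hkey : (1:ℝ) ≤ ((∏ i, (D i : ℝ) ^ N i) * |S|) * (A * ∏ i, F i ^ N i) ^ (c - 1) := by
    have hcerase : (Finset.univ.erase σ₀).card = c - 1 := by
      rw [Finset.card_erase_of_mem (Finset.mem_univ _), Finset.card_univ, hcard, ← hc]
    have hsplit : ∏ σ : K →ₐ[ℚ] ℂ, Complex.abs (σ β)
        = Complex.abs (σ₀ β) * ∏ σ ∈ Finset.univ.erase σ₀, Complex.abs (σ β) :=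
      (Finset.mul_prod_erase _ _ (Finset.mem_univ σ₀)).symm
    have hrest : ∏ σ ∈ Finset.univ.erase σ₀, Complex.abs (σ β)
        ≤ (A * ∏ i, F i ^ N i) ^ (c - 1) := by
      rw [← hcerase]
      rw [← Finset.prod_const]
      exact Finset.prod_le_prod (fun σ _ => Complex.abs.nonneg _) fun σ _ => hbound σ
    calc (1:ℝ) ≤ |(n : ℝ)| := h1n
      _ = ∏ σ : K →ₐ[ℚ] ℂ, Complex.abs (σ β) := hprod
      _ = Complex.abs (σ₀ β) * ∏ σ ∈ Finset.univ.erase σ₀, Complex.abs (σ β) := hsplit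
      _ ≤ Complex.abs (σ₀ β) * (A * ∏ i, F i ^ N i) ^ (c - 1) := by
          refine mul_le_mul_of_nonneg_left hrest (Complex.abs.nonneg _)
      _ = ((∏ i, (D i : ℝ) ^ N i) * |S|) * (A * ∏ i, F i ^ N i) ^ (c - 1) := by
          rw [hσ₀β]
  -- cleanup: the coefficients bound
  have hepos : (0:ℝ) < e := lt_of_lt_of_le one_pos he1
  have hR : (0:ℝ) < A ^ (c - 1) * ∏ i, e ^ (c * N i) :=
    mul_pos (pow_pos hApos _) (Finset.prod_pos fun i _ => pow_pos hepos _)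
  have hmain : (1:ℝ) ≤ |S| * (A ^ (c - 1) * ∏ i, e ^ (c * N i)) := by
    have hcoef : (∏ i, (D i : ℝ) ^ N i) * (∏ i, F i ^ N i) ^ (c - 1)
        ≤ ∏ i, e ^ (c * N i) := by
      rw [← Finset.prod_pow, ← Finset.prod_mul_distrib]
      have hF0 : ∀ i, (0:ℝ) ≤ F i := fun i => le_trans zero_le_one (hF1 i)
      refine Finset.prod_le_prod (fun i _ => mul_nonneg (pow_nonneg (Nat.cast_nonneg _) _)
        (pow_nonneg (pow_nonneg (hF0 i) _) _)) fun i _ => ?_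
      have h1 : (D i : ℝ) ^ N i ≤ e ^ N i :=
        pow_le_pow_left₀ (Nat.cast_nonneg _) ((hDF i).trans (heF i)) _
      have h2 : (F i ^ N i) ^ (c - 1) ≤ (e ^ N i) ^ (c - 1) :=
        pow_le_pow_left₀ (pow_nonneg (hF0 i) _) (pow_le_pow_left₀ (hF0 i) (heF i) _) _
      calc (D i : ℝ) ^ N i * (F i ^ N i) ^ (c - 1)
          ≤ e ^ N i * (e ^ N i) ^ (c - 1) := by
            refine mul_le_mul h1 h2 (pow_nonneg (pow_nonneg (hF0 i) _) _)
              (pow_nonneg (le_trans zero_le_one he1) _)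
        _ = e ^ (c * N i) := by
            rw [← pow_mul, ← pow_add]
            congr 1
            cases c with
            | zero => omega
            | succ c' => rw [Nat.succ_sub_one]; ring
    calc (1:ℝ) ≤ ((∏ i, (D i : ℝ) ^ N i) * |S|) * (A * ∏ i, F i ^ N i) ^ (c - 1) := hkey
      _ = |S| * (A ^ (c - 1) * ((∏ i, (D i : ℝ) ^ N i) * (∏ i, F i ^ N i) ^ (c - 1))) := by
          rw [mul_pow]; ring
      _ ≤ |S| * (A ^ (c - 1) * ∏ i, e ^ (c * N i)) := by
          refine mul_le_mul_of_nonneg_left (mul_le_mul_of_nonneg_left hcoef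
            (pow_nonneg (le_of_lt hApos) _)) (abs_nonneg _)
  -- final rewriting of the goal
  have hlhs : A ^ ((1 : ℤ) - (c : ℤ)) * ∏ i, e ^ (-((c : ℤ) * (N i : ℤ)))
      = (A ^ (c - 1) * ∏ i, e ^ (c * N i))⁻¹ := by
    rw [mul_inv]
    congr 1
    · rw [show (1 : ℤ) - (c : ℤ) = -((c - 1 : ℕ) : ℤ) by push_cast [Nat.cast_sub hc1]; ring,
        zpow_neg, zpow_natCast]
    · rw [← Finset.prod_inv_distrib]
      refine Finset.prod_congr rfl fun i _ => ?_
      rw [show -((c : ℤ) * (N i : ℤ)) = -((c * N i : ℕ) : ℤ) by push_cast; ring,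
        zpow_neg, zpow_natCast]
  rw [hlhs]
  have := mul_le_mul_of_nonneg_right hmain (le_of_lt (inv_pos.mpr hR))
  rw [one_mul, mul_assoc, mul_inv_cancel₀ hR.ne', mul_one] at this
  exact this
end

section
/- Let k ≥ 1 and let f : (Fin k → Bool) → ℝ be degenerate, i.e., there exist unary functions u_i : Bool → ℝ (i ∈ Fin k) such that f(x) = ∏_{i} u_i(x i) for all x. If f is symmetric, then at least one of the following holds: (i) f(x) = 0 for every x other than the all-false assignment; (ii) f(x) = 0 for every x other than the all-true assignment; (iii) there exist real numbers y and z such that f(x) = y · z^{w(x)} for all x, where w(x) is the number of indices i with x i = true. -/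
open Finset in
/-- A symmetric degenerate constraint `f` of arity `k ≥ 1`
either vanishes everywhere except possibly at the all-false assignment, or
vanishes everywhere except possibly at the all-true assignment, or has the
form `f x = y · z^{w(x)}` for some reals `y, z`, where `w(x)` is the Hamming
weight of `x`. -/
theorem symmetric_degenerate_form
    (k : ℕ) (hk : 1 ≤ k) (f : (Fin k → Bool) → ℝ)
    (hdeg : ∃ u : Fin k → Bool → ℝ, ∀ x : Fin k → Bool, f x = ∏ i, u i (x i))
    (hsym : ∀ x y : Fin k → Bool,
      (univ.filter (fun i => x i = true)).card
        = (univ.filter (fun i => y i = true)).card → f x = f y) :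
    (∀ x : Fin k → Bool, x ≠ (fun _ => false) → f x = 0) ∨
    (∀ x : Fin k → Bool, x ≠ (fun _ => true) → f x = 0) ∨
    (∃ y z : ℝ, ∀ x : Fin k → Bool,
      f x = y * z ^ (univ.filter (fun i => x i = true)).card) := by
  obtain ⟨u, hu⟩ := hdeg
  have hperm : ∀ (σ : Equiv.Perm (Fin k)) (x : Fin k → Bool),
      f (x ∘ σ) = f x := by
    intro σ x
    apply hsym
    apply Finset.card_bij' (fun i _ => σ i) (fun i _ => σ.symm i)
    · simp
    · simp
    · simp
    · simp
  by_cases hb : ∃ i, u i true = 0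
  · obtain ⟨i0, hi0⟩ := hb
    left
    intro x hx
    have hj : ∃ j, x j = true := by
      by_contra h
      push_neg at h
      exact hx (funext fun j => by simpa using h j)
    obtain ⟨j, hj⟩ := hj
    rw [← hperm (Equiv.swap i0 j) x, hu]
    apply Finset.prod_eq_zero (Finset.mem_univ i0)
    simp [Equiv.swap_apply_left, hj, hi0]
  by_cases ha : ∃ i, u i false = 0
  · obtain ⟨i0, hi0⟩ := ha
    right; left
    intro x hx
    have hj : ∃ j, x j = false := by
      by_contra h
      push_neg at h
      exact hx (funext fun j => by simpa using h j)
    obtain ⟨j, hj⟩ := hj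
    rw [← hperm (Equiv.swap i0 j) x, hu]
    apply Finset.prod_eq_zero (Finset.mem_univ i0)
    simp [Equiv.swap_apply_left, hj, hi0]
  push_neg at ha hb
  right; right
  set i0 : Fin k := ⟨0, hk⟩ with hi0def
  have hA : (∏ i, u i false) ≠ 0 := Finset.prod_ne_zero_iff.mpr fun i _ => ha i
  refine ⟨∏ i, u i false, u i0 true / u i0 false, ?_⟩
  -- key: u i true = z * u i false for all i
  have key : ∀ i, u i true = (u i0 true / u i0 false) * u i false := by
    intro i
    have h1 : f (fun j => decide (j = i)) = f (fun j => decide (j = i0)) := by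
      apply hsym
      have e1 : (univ.filter (fun j => (decide (j = i) : Bool) = true)) = {i} := by
        ext j; simp
      have e2 : (univ.filter (fun j => (decide (j = i0) : Bool) = true)) = {i0} := by
        ext j; simp
      rw [e1, e2]
      simp
    rw [hu, hu] at h1
    have e : ∀ i' : Fin k, ∏ j, u j (decide (j = i'))
        = u i' true * ∏ j ∈ univ.erase i', u j false := by
      intro i'
      rw [← Finset.mul_prod_erase univ (fun j => u j (decide (j = i'))) (Finset.mem_univ i')]
      congr 1
      · simp
      · exact Finset.prod_congr rfl fun j hj => by simp [(Finset.mem_erase.mp hj).1]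
    rw [e i, e i0] at h1
    have hAi : u i false * ∏ j ∈ univ.erase i, u j false = ∏ j, u j false :=
      Finset.mul_prod_erase univ (fun j => u j false) (Finset.mem_univ i)
    have hAi0 : u i0 false * ∏ j ∈ univ.erase i0, u j false = ∏ j, u j false :=
      Finset.mul_prod_erase univ (fun j => u j false) (Finset.mem_univ i0)
    have hcan : u i true * u i0 false = u i0 true * u i false := by
      apply mul_right_cancel₀ hA
      linear_combination (u i false * u i0 false) * h1 - (u i true * u i0 false) * hAi
        + (u i0 true * u i false) * hAi0
    rw [div_mul_eq_mul_div, eq_div_iff (ha i0)]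
    linear_combination hcan
  intro x
  rw [hu]
  calc ∏ i, u i (x i)
      = ∏ i, (u i false * (if x i = true then u i0 true / u i0 false else 1)) := by
        apply Finset.prod_congr rfl
        intro i _
        cases hx : x i with
        | false => simp
        | true => simp [key i, mul_comm]
    _ = (∏ i, u i false) * ∏ i, (if x i = true then u i0 true / u i0 false else 1) :=
        Finset.prod_mul_distrib
    _ = (∏ i, u i false) * (u i0 true / u i0 false) ^ (univ.filter (fun i => x i = true)).card := by
        rw [← Finset.prod_filter, Finset.prod_const]
end
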